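/- arXiv:1707.02172 — 4 statements merged into one kernel-verified Lean document; each statement's English description precedes it below -/
import Mathlib

section
/- Spherical deaveraging: let (Γ,p) be a framework in S^d and q an infinitesimal isometric deformation (⟨p_i,q_i⟩ = 0 and ⟨p_i,q_j⟩ + ⟨q_i,p_j⟩ = 0 for all edges ij), with p_i ± q_i ≠ 0 for all i. Then the normalized configurations p_i⁺ = (p_i+q_i)/‖p_i+q_i‖ and p_i⁻ = (p_i−q_i)/‖p_i−q_i‖ satisfy ⟨p_i⁺, p_j⁺⟩ = ⟨p_i⁻, p_j⁻⟩ for every edge ij, i.e. they are isometric spherical frameworks. -/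
open scoped RealInnerProductSpace

/-- Spherical deaveraging: let `(Γ, p)` be a framework in `S^d` and `q` an
infinitesimal isometric deformation (`⟪p i, q i⟫ = 0` and `⟪p i, q j⟫ + ⟪q i, p j⟫ = 0`
on edges), with `p i ± q i ≠ 0`. Then the normalized configurations
`p⁺ i = (p i + q i)/‖p i + q i‖` and `p⁻ i = (p i − q i)/‖p i − q i‖` satisfy
`⟪p⁺ i, p⁺ j⟫ = ⟪p⁻ i, p⁻ j⟫` on every edge, i.e. they are isometric spherical
frameworks. -/
theorem deaveraging_spherical
    {d : ℕ} {V : Type*} (Γ : SimpleGraph V)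
    (p : V → EuclideanSpace ℝ (Fin (d + 1)))
    (hsphere : ∀ i, ⟪p i, p i⟫ = 1)
    (q : V → EuclideanSpace ℝ (Fin (d + 1)))
    (htangent : ∀ i, ⟪p i, q i⟫ = 0)
    (hdef : ∀ i j, Γ.Adj i j → ⟪p i, q j⟫ + ⟪q i, p j⟫ = 0)
    (hne : ∀ i, p i + q i ≠ 0 ∧ p i - q i ≠ 0) :
    ∀ i j, Γ.Adj i j →
      ⟪‖p i + q i‖⁻¹ • (p i + q i), ‖p j + q j‖⁻¹ • (p j + q j)⟫ =
      ⟪‖p i - q i‖⁻¹ • (p i - q i), ‖p j - q j‖⁻¹ • (p j - q j)⟫ := by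
  have hnorm : ∀ i, ‖p i + q i‖ = ‖p i - q i‖ := by
    intro i
    have h1 : ‖p i + q i‖ ^ 2 = ‖p i - q i‖ ^ 2 := by
      rw [← real_inner_self_eq_norm_sq, ← real_inner_self_eq_norm_sq,
        inner_add_add_self, inner_sub_sub_self, htangent i]
      have hc : ⟪q i, p i⟫ = (0:ℝ) := by rw [real_inner_comm]; exact htangent i
      rw [hc]; ring
    have := congrArg Real.sqrt h1
    simpa [Real.sqrt_sq, norm_nonneg] using this
  intro i j hij
  have hin : ⟪p i + q i, p j + q j⟫ = ⟪p i - q i, p j - q j⟫ := by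
    have h := hdef i j hij
    simp only [inner_add_left, inner_add_right, inner_sub_left, inner_sub_right]
    linarith
  rw [inner_smul_left, inner_smul_right, inner_smul_left, inner_smul_right,
    hnorm i, hnorm j, hin]
end

section
/- Two frameworks in ℝ^d related by a projective transformation and the associated static Pogorelov map have corresponding equilibrium loads: if Φ is a projective transformation of ℝP^d mapping (Γ,p) into ℝ^d, and Φ^stat_p = h_L(p)² · dΦ_p where h_L(p) is the (signed) distance from p to the hyperplane L sent to infinity, then a load f on (Γ,p) is an equilibrium load if and only if Φ^stat ∘ f is an equilibrium load on (Γ, Φ∘p). -/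
open scoped Matrix

/-- The projective transformation of the affine chart `x₀ = 1` of `ℝP^d` induced by
`M ∈ GL(d+1, ℝ)`: apply `M` to `(1, x)` and renormalize the zeroth coordinate. -/
noncomputable def projChart {d : ℕ} (M : Matrix (Fin (d + 1)) (Fin (d + 1)) ℝ)
    (x : Fin d → ℝ) : Fin d → ℝ :=
  fun k => M.mulVec (Fin.cons 1 x) k.succ / M.mulVec (Fin.cons 1 x) 0

/-- The signed distance from `x ∈ ℝ^d` to the hyperplane `L` sent to infinity by the
projective transformation induced by `M`, namely `L = {x | M.mulVec (1,x) 0 = 0}`. -/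
noncomputable def signedDistToL {d : ℕ} (M : Matrix (Fin (d + 1)) (Fin (d + 1)) ℝ)
    (x : Fin d → ℝ) : ℝ :=
  M.mulVec (Fin.cons 1 x) 0 /
    Real.sqrt ((fun k : Fin d => M 0 k.succ) ⬝ᵥ (fun k : Fin d => M 0 k.succ))

/-! Identify a point `x` with `(1, x)` and a force `v` with `(0, v)`; the equilibrium conditions
say exactly that the bivector `∑ᵢ (1, pᵢ) ∧ (0, fᵢ)` vanishes, where `q ∧ w` is encoded as the
antisymmetric matrix `q wᵀ - w qᵀ`. The matrix `M` acts on such bivectors by `S ↦ M S Mᵀ`, which is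
injective since `M` is invertible. Differentiating `M (1, y) = g(y) • (1, Φ y)`, where
`g(y) = (M (1, y))₀`, gives `M (0, v) = g(x) • (0, dΦₓ v) + (M (0, v))₀ • (1, Φ x)`, hence
`M (1, x) ∧ M (0, v) = g(x)² • (1, Φ x) ∧ (0, dΦₓ v) = |ν|² • (1, Φ x) ∧ (0, h_L(x)² • dΦₓ v)`,
with `ν` the normal of `L`, since `h_L = g / |ν|`. -/

section Wedge

variable {ι R : Type*} [CommRing R]

def wedgeMatrix (q w : ι → R) : Matrix ι ι R :=
  Matrix.vecMulVec q w - Matrix.vecMulVec w q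

lemma wedgeMatrix_apply (q w : ι → R) (a b : ι) :
    wedgeMatrix q w a b = q a * w b - w a * q b :=
  rfl

lemma wedgeMatrix_smul_smul_add_smul_self (a b c : R) (q w : ι → R) :
    wedgeMatrix (a • q) (c • w + b • q) = (a * c) • wedgeMatrix q w := by
  ext i j
  simp only [wedgeMatrix_apply, Matrix.smul_apply, Pi.add_apply, Pi.smul_apply, smul_eq_mul]
  ring

lemma wedgeMatrix_smul_right (c : R) (q w : ι → R) :
    wedgeMatrix q (c • w) = c • wedgeMatrix q w := by
  ext i j
  simp only [wedgeMatrix_apply, Matrix.smul_apply, Pi.smul_apply, smul_eq_mul]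
  ring

lemma mul_wedgeMatrix_mul_transpose [Fintype ι] (A : Matrix ι ι R) (q w : ι → R) :
    A * wedgeMatrix q w * Aᵀ = wedgeMatrix (A *ᵥ q) (A *ᵥ w) := by
  simp only [wedgeMatrix, Matrix.mul_sub, Matrix.sub_mul, Matrix.mul_vecMulVec,
    Matrix.vecMulVec_mul, Matrix.vecMul_transpose]

end Wedge

lemma smul_cons_zero {S R : Type*} [Zero R] [SMulZeroClass S R] {n : ℕ} (c : S)
    (v : Fin n → R) : c • (Fin.cons 0 v : Fin (n + 1) → R) = Fin.cons 0 (c • v) := by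
  ext i
  refine Fin.cases ?_ (fun k => ?_) i <;> simp

lemma mul_mul_transpose_eq_zero_iff {n R : Type*} [Fintype n] [DecidableEq n] [CommRing R]
    {A : Matrix n n R} (hA : IsUnit A.det) (S : Matrix n n R) :
    A * S * Aᵀ = 0 ↔ S = 0 := by
  rw [(A.isUnit_transpose.mpr ((A.isUnit_iff_isUnit_det).mpr hA)).mul_left_eq_zero,
    ((A.isUnit_iff_isUnit_det).mpr hA).mul_right_eq_zero]

def IsEquilibriumLoad {d : ℕ} {V : Type*} [Fintype V] (p f : V → Fin d → ℝ) : Prop :=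
  ∑ i, f i = 0 ∧ ∀ k l : Fin d, ∑ i, (p i k * f i l - f i k * p i l) = 0

lemma isEquilibriumLoad_iff_sum_wedgeMatrix {d : ℕ} {V : Type*} [Fintype V]
    (p f : V → Fin d → ℝ) :
    IsEquilibriumLoad p f ↔ ∑ i, wedgeMatrix (Fin.cons 1 (p i)) (Fin.cons 0 (f i)) = 0 := by
  simp only [IsEquilibriumLoad, ← Matrix.ext_iff, funext_iff, Fin.forall_fin_succ,
    Matrix.sum_apply, wedgeMatrix_apply, Fin.cons_zero, Fin.cons_succ, Finset.sum_apply,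
    Pi.zero_apply, Matrix.zero_apply, mul_zero, zero_mul, mul_one, one_mul, sub_zero, zero_sub,
    Finset.sum_const_zero, Finset.sum_neg_distrib, neg_eq_zero, true_and, forall_and]
  tauto

section ProjectiveChart

variable {d : ℕ} (M : Matrix (Fin (d + 1)) (Fin (d + 1)) ℝ)

lemma hasFDerivAt_mulVec_cons_one (x : Fin d → ℝ) :
    HasFDerivAt (fun y : Fin d → ℝ => M *ᵥ Fin.cons 1 y)
      (M.mulVecLin.toContinuousLinearMap ∘L
        (0 : (Fin d → ℝ) →L[ℝ] ℝ).finCons (ContinuousLinearMap.id ℝ (Fin d → ℝ))) x :=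
  M.mulVecLin.toContinuousLinearMap.hasFDerivAt.comp x
    ((hasFDerivAt_const (1 : ℝ) x).finCons (hasFDerivAt_id x))

lemma mulVec_cons_one_eq_smul {x : Fin d → ℝ} (hx : (M *ᵥ Fin.cons 1 x) 0 ≠ 0) :
    M *ᵥ Fin.cons 1 x = (M *ᵥ Fin.cons 1 x) 0 • Fin.cons 1 (projChart M x) := by
  ext i
  refine Fin.cases ?_ (fun k => ?_) i
  · simp
  · simp only [Pi.smul_apply, Fin.cons_succ, projChart, smul_eq_mul]
    field_simp

lemma mulVec_cons_zero_eq_fderiv_projChart {x : Fin d → ℝ} (hx : (M *ᵥ Fin.cons 1 x) 0 ≠ 0)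
    (v : Fin d → ℝ) :
    M *ᵥ Fin.cons 0 v = (M *ᵥ Fin.cons 1 x) 0 • Fin.cons 0 (fderiv ℝ (projChart M) x v) +
      (M *ᵥ Fin.cons 0 v) 0 • Fin.cons 1 (projChart M x) := by
  have hg := hasFDerivAt_mulVec_cons_one M x
  have hg_apply := hasFDerivAt_pi'.1 hg
  have hΦ : DifferentiableAt ℝ (projChart M) x := differentiableAt_pi.2 fun k => by
    simpa only [projChart, div_eq_mul_inv] using
      (hg_apply k.succ).differentiableAt.fun_mul ((hg_apply 0).differentiableAt.fun_inv hx)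
  have hnear : (fun y => M *ᵥ Fin.cons 1 y) =ᶠ[nhds x]
      fun y => (M *ᵥ Fin.cons 1 y) 0 • Fin.cons 1 (projChart M y) :=
    ((hg_apply 0).continuousAt.eventually_ne hx).mono fun y hy => mulVec_cons_one_eq_smul M hy
  have hderiv := hg.unique (((hg_apply 0).smul
    ((hasFDerivAt_const (1 : ℝ) x).finCons hΦ.hasFDerivAt)).congr_of_eventuallyEq hnear)
  have hderiv_v := congrArg (fun L => L v) hderiv
  simp only [ContinuousLinearMap.comp_apply, ContinuousLinearMap.prod_apply, zero_apply,
    ContinuousLinearMap.id_apply, ContinuousLinearEquiv.coe_coe,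
    LinearMap.coe_toContinuousLinearMap', Matrix.mulVecLin_apply, add_apply, smul_apply,
    ContinuousLinearMap.smulRight_apply, ContinuousLinearMap.proj_apply] at hderiv_v
  exact hderiv_v

lemma sq_signedDistToL (x : Fin d → ℝ) :
    signedDistToL M x ^ 2 = (M *ᵥ Fin.cons 1 x) 0 ^ 2 /
      ((fun k : Fin d => M 0 k.succ) ⬝ᵥ (fun k : Fin d => M 0 k.succ)) := by
  have hν : 0 ≤ (fun k : Fin d => M 0 k.succ) ⬝ᵥ (fun k : Fin d => M 0 k.succ) :=
    Finset.sum_nonneg fun k _ => mul_self_nonneg _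
  rw [signedDistToL, div_pow, Real.sq_sqrt hν]

lemma wedgeMatrix_mulVec_cons_eq_smul_wedgeMatrix_projChart
    (hν : (fun k : Fin d => M 0 k.succ) ⬝ᵥ (fun k : Fin d => M 0 k.succ) ≠ 0) {x : Fin d → ℝ}
    (hx : (M *ᵥ Fin.cons 1 x) 0 ≠ 0) (v : Fin d → ℝ) :
    wedgeMatrix (M *ᵥ Fin.cons 1 x) (M *ᵥ Fin.cons 0 v) =
      ((fun k : Fin d => M 0 k.succ) ⬝ᵥ (fun k : Fin d => M 0 k.succ)) •
        wedgeMatrix (Fin.cons 1 (projChart M x))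
          (Fin.cons 0 (signedDistToL M x ^ 2 • fderiv ℝ (projChart M) x v)) := by
  calc wedgeMatrix (M *ᵥ Fin.cons 1 x) (M *ᵥ Fin.cons 0 v)
      = wedgeMatrix ((M *ᵥ Fin.cons 1 x) 0 • Fin.cons 1 (projChart M x))
          ((M *ᵥ Fin.cons 1 x) 0 • Fin.cons 0 (fderiv ℝ (projChart M) x v) +
            (M *ᵥ Fin.cons 0 v) 0 • Fin.cons 1 (projChart M x)) := by
        rw [← mulVec_cons_one_eq_smul M hx, ← mulVec_cons_zero_eq_fderiv_projChart M hx]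
    _ = (M *ᵥ Fin.cons 1 x) 0 ^ 2 •
          wedgeMatrix (Fin.cons 1 (projChart M x)) (Fin.cons 0 (fderiv ℝ (projChart M) x v)) := by
        rw [wedgeMatrix_smul_smul_add_smul_self, sq]
    _ = _ := by
        rw [← smul_cons_zero, wedgeMatrix_smul_right, smul_smul, sq_signedDistToL]
        field_simp

end ProjectiveChart

theorem static_pogorelov_projective_equilibrium_general
    {d : ℕ} {V : Type*} [Fintype V]
    (M : Matrix (Fin (d + 1)) (Fin (d + 1)) ℝ) (hM : IsUnit M.det)
    (hL : ¬ ∀ k : Fin d, M 0 k.succ = 0)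
    (p : V → Fin d → ℝ)
    (hdom : ∀ i, M.mulVec (Fin.cons 1 (p i)) 0 ≠ 0)
    (f : V → Fin d → ℝ)
    (f' : V → Fin d → ℝ)
    (hf' : ∀ i, f' i =
      (signedDistToL M (p i)) ^ 2 • fderiv ℝ (projChart M) (p i) (f i)) :
    ((∑ i, f i = 0) ∧
      (∀ k l : Fin d, ∑ i, (p i k * f i l - f i k * p i l) = 0)) ↔
    ((∑ i, f' i = 0) ∧
      (∀ k l : Fin d, ∑ i, (projChart M (p i) k * f' i l - f' i k * projChart M (p i) l)
        = 0)) := by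
  have hν : (fun k : Fin d => M 0 k.succ) ⬝ᵥ (fun k : Fin d => M 0 k.succ) ≠ 0 := by
    simpa [funext_iff] using hL
  obtain rfl : f' = fun i => signedDistToL M (p i) ^ 2 • fderiv ℝ (projChart M) (p i) (f i) :=
    funext hf'
  change IsEquilibriumLoad p f ↔ IsEquilibriumLoad (fun i => projChart M (p i)) _
  rw [isEquilibriumLoad_iff_sum_wedgeMatrix, isEquilibriumLoad_iff_sum_wedgeMatrix,
    ← mul_mul_transpose_eq_zero_iff hM, Finset.mul_sum, Finset.sum_mul]
  simp only [mul_wedgeMatrix_mul_transpose,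
    wedgeMatrix_mulVec_cons_eq_smul_wedgeMatrix_projChart M hν (hdom _), ← Finset.smul_sum,
    smul_eq_zero, hν, false_or]

/-- If `Φ` is a projective transformation of `ℝP^d` mapping the framework
`(Γ, p)` into `ℝ^d`, and `Φ^stat_x = h_L(x)² • dΦ_x` is the associated static Pogorelov
map (`h_L` the signed distance to the hyperplane `L` sent to infinity), then a load `f`
on `(Γ, p)` is an equilibrium load if and only if `Φ^stat ∘ f` is an equilibrium load on
`(Γ, Φ ∘ p)`. -/
theorem static_pogorelov_projective_equilibrium
    {d : ℕ} {V : Type*} [Fintype V] (Γ : SimpleGraph V)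
    (M : Matrix (Fin (d + 1)) (Fin (d + 1)) ℝ) (hM : IsUnit M.det)
    (hL : ¬ ∀ k : Fin d, M 0 k.succ = 0)
    (p : V → Fin d → ℝ)
    (hdom : ∀ i, M.mulVec (Fin.cons 1 (p i)) 0 ≠ 0)
    (f : V → Fin d → ℝ)
    (f' : V → Fin d → ℝ)
    (hf' : ∀ i, f' i =
      (signedDistToL M (p i)) ^ 2 • fderiv ℝ (projChart M) (p i) (f i)) :
    ((∑ i, f i = 0) ∧
      (∀ k l : Fin d, ∑ i, (p i k * f i l - f i k * p i l) = 0)) ↔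
    ((∑ i, f' i = 0) ∧
      (∀ k l : Fin d, ∑ i, (projChart M (p i) k * f' i l - f' i k * projChart M (p i) l)
        = 0)) :=
  static_pogorelov_projective_equilibrium_general M hM hL p hdom f f' hf'
end

section
/- Maxwell-Cremona, lift to reciprocal: let (Γ,p) be a planar framework with a vertical polyhedral lift, i.e. linear-affine functions f_α : ℝ² → ℝ for each face α such that for every dual pair (αβ, ij) the function f_α − f_β vanishes at p_i and p_j, and f_α ≠ f_β for adjacent faces. Then m_α := grad f_α defines a reciprocal diagram: m_α − m_β ⊥ p_i − p_j for every dual pair (αβ, ij), and m_α ≠ m_β for adjacent faces α, β with p_i ≠ p_j. -/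
open scoped Matrix

/-- Maxwell–Cremona, lift to reciprocal: let `(Γ, p)` be a planar
framework with a vertical polyhedral lift: to each face `α` an affine function
`f_α(x) = ⟨grad α, x⟩ + const α` such that for every dual pair `(αβ, ij)` the function
`f_α − f_β` vanishes at `p i` and `p j`, and adjacent faces carry different affine
functions. Then `m := grad` defines a reciprocal diagram: for every dual pair
`(αβ, ij)`, `m α − m β ⊥ p i − p j`, and `m α ≠ m β` whenever `p i ≠ p j`. -/
theorem maxwell_cremona_lift_to_reciprocal
    {V F : Type*}
    (dualPair : F → F → V → V → Prop)
    (p : V → Fin 2 → ℝ)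
    (grad : F → Fin 2 → ℝ) (const : F → ℝ) :
    ∀ α β i j, dualPair α β i j →
      (grad α ⬝ᵥ p i + const α = grad β ⬝ᵥ p i + const β) →
      (grad α ⬝ᵥ p j + const α = grad β ⬝ᵥ p j + const β) →
      (grad α, const α) ≠ (grad β, const β) →
      p i ≠ p j →
      (grad α - grad β) ⬝ᵥ (p i - p j) = 0 ∧ grad α ≠ grad β := by
  intro α β i j _ hi hj hne hp
  constructor
  · simp [dotProduct, Fin.sum_univ_two] at hi hj ⊢
    linarith
  · intro hg
    apply hne
    have : const α = const β := by
      have := hi; rw [hg] at this; linarith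
    rw [hg, this]
end

section
/- Spherical Maxwell-Cremona, lift to reciprocal: let (Γ,p) be a framework in S² with a weak polyhedral lift p̃_i = a_i p_i (a_i ≠ 0), such that for each face α the points {p̃_i : i ∈ α} lie in an affine plane M_α = {x : ⟨m̃_α, x⟩ = 1} not through the origin. Then for every dual pair (αβ, ij) the vector m̃_β − m̃_α is orthogonal to both p_i and p_j; consequently, setting m_α = m̃_α/‖m̃_α‖, the great-circle arcs m_α m_β and p_i p_j are perpendicular (⟨m_α × m_β, p_i × p_j⟩ = 0) and ⟨m_α, p_i⟩ ≠ 0 for every incident pair (α,i). -/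
/-!
On the plane of a face `α`, `⟨m̃ α, a i • p i⟩ = 1` forces `⟨m̃ α, p i⟩ = (a i)⁻¹`, a value that
does not depend on the face. So two faces sharing the edge `ij` have normals with equal inner
products against `p i` and `p j`, i.e. `m̃ β - m̃ α` is orthogonal to both; the Binet–Cauchy
identity turns this into the perpendicularity of the cross products, and normalising `m̃` only
rescales, so it preserves both this and `⟨m̃ α, p i⟩ ≠ 0`.
-/

open scoped Matrix

section DotProduct

variable {n K : Type*} [Fintype n] [Field K]

theorem dotProduct_eq_inv_of_dotProduct_smul_eq_one {u x : n → K} {c : K}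
    (h : u ⬝ᵥ (c • x) = 1) : u ⬝ᵥ x = c⁻¹ := by
  rw [dotProduct_smul, smul_eq_mul] at h
  exact eq_inv_of_mul_eq_one_right h

theorem dotProduct_ne_zero_of_dotProduct_smul_eq_one {u x : n → K} {c : K}
    (h : u ⬝ᵥ (c • x) = 1) : u ⬝ᵥ x ≠ 0 := by
  rw [dotProduct_smul, smul_eq_mul] at h
  exact right_ne_zero_of_mul_eq_one h

theorem sub_dotProduct_eq_zero_of_dotProduct_smul_eq_one {u v x : n → K} {c : K}
    (hu : u ⬝ᵥ (c • x) = 1) (hv : v ⬝ᵥ (c • x) = 1) : (v - u) ⬝ᵥ x = 0 := by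
  rw [sub_dotProduct, dotProduct_eq_inv_of_dotProduct_smul_eq_one hu,
    dotProduct_eq_inv_of_dotProduct_smul_eq_one hv, sub_self]

end DotProduct

theorem inv_sqrt_dotProduct_self_smul_dotProduct_ne_zero {n : Type*} [Fintype n] {v x : n → ℝ}
    (h : v ⬝ᵥ x ≠ 0) : ((√(v ⬝ᵥ v))⁻¹ • v) ⬝ᵥ x ≠ 0 := by
  have hv : v ≠ 0 := by
    rintro rfl
    exact h (zero_dotProduct x)
  have hpos : 0 < v ⬝ᵥ v := by
    simpa only [star_trivial] using Matrix.dotProduct_self_star_pos_iff.mpr hv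
  rw [smul_dotProduct, smul_eq_mul]
  exact mul_ne_zero (inv_ne_zero (Real.sqrt_ne_zero'.mpr hpos)) h

section CrossProduct

variable {R : Type*} [CommRing R]

theorem smul_cross_smul (c d : R) (u v : Fin 3 → R) :
    (c • u) ⨯₃ (d • v) = (c * d) • (u ⨯₃ v) := by
  rw [LinearMap.map_smul₂, map_smul, smul_smul]

/-- Since `u ⨯₃ v = u ⨯₃ (v - u)`, the Binet–Cauchy identity leaves only terms with a factor
`(v - u) ⬝ᵥ x` or `(v - u) ⬝ᵥ y`. -/
theorem cross_dotProduct_cross_eq_zero_of_sub_dotProduct_eq_zero {u v x y : Fin 3 → R}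
    (hx : (v - u) ⬝ᵥ x = 0) (hy : (v - u) ⬝ᵥ y = 0) : (u ⨯₃ v) ⬝ᵥ (x ⨯₃ y) = 0 := by
  have hcross : u ⨯₃ v = u ⨯₃ (v - u) := by rw [map_sub, cross_self, sub_zero]
  rw [hcross, cross_dot_cross, hx, hy, mul_zero, mul_zero, sub_zero]

theorem smul_cross_smul_dotProduct_cross_eq_zero {u v x y : Fin 3 → R} (c d : R)
    (hx : (v - u) ⬝ᵥ x = 0) (hy : (v - u) ⬝ᵥ y = 0) :
    ((c • u) ⨯₃ (d • v)) ⬝ᵥ (x ⨯₃ y) = 0 := by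
  rw [smul_cross_smul, smul_dotProduct,
    cross_dotProduct_cross_eq_zero_of_sub_dotProduct_eq_zero hx hy, smul_zero]

end CrossProduct

theorem spherical_maxwell_cremona_lift_to_reciprocal_general
    {V F : Type*} (Γ : SimpleGraph V)
    (mem : F → V → Prop)
    (dualPair : F → F → V → V → Prop)
    (hdual : ∀ α β i j, dualPair α β i j →
      Γ.Adj i j ∧ mem α i ∧ mem α j ∧ mem β i ∧ mem β j)
    (p : V → Fin 3 → ℝ)
    (a : V → ℝ)
    (mt : F → Fin 3 → ℝ)
    (hplane : ∀ α i, mem α i → mt α ⬝ᵥ (a i • p i) = 1)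
    (m : F → Fin 3 → ℝ)
    (hm : ∀ α, m α = (Real.sqrt (mt α ⬝ᵥ mt α))⁻¹ • mt α) :
    (∀ α β i j, dualPair α β i j →
      (mt β - mt α) ⬝ᵥ p i = 0 ∧ (mt β - mt α) ⬝ᵥ p j = 0 ∧
      (m α ⨯₃ m β) ⬝ᵥ (p i ⨯₃ p j) = 0) ∧
    (∀ α i, mem α i → m α ⬝ᵥ p i ≠ 0) := by
  refine ⟨fun α β i j hd => ?_, fun α i hi => ?_⟩
  · obtain ⟨-, hαi, hαj, hβi, hβj⟩ := hdual α β i j hd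
    have hi := sub_dotProduct_eq_zero_of_dotProduct_smul_eq_one (hplane α i hαi) (hplane β i hβi)
    have hj := sub_dotProduct_eq_zero_of_dotProduct_smul_eq_one (hplane α j hαj) (hplane β j hβj)
    rw [hm α, hm β]
    exact ⟨hi, hj, smul_cross_smul_dotProduct_cross_eq_zero _ _ hi hj⟩
  · rw [hm α]
    exact inv_sqrt_dotProduct_self_smul_dotProduct_ne_zero
      (dotProduct_ne_zero_of_dotProduct_smul_eq_one (hplane α i hi))

/-- Spherical Maxwell–Cremona, lift to reciprocal: let `(Γ, p)` be a
framework in `S²` with a weak polyhedral lift `p̃ i = a i • p i` (`a i ≠ 0`) such that for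
each face `α` the lifted vertices of `α` lie in the affine plane `{x | ⟨m̃ α, x⟩ = 1}`
(not through the origin, `m̃ α ≠ 0`). Then for every dual pair `(αβ, ij)` the vector
`m̃ β − m̃ α` is orthogonal to both `p i` and `p j`; consequently, with
`m α = m̃ α / ‖m̃ α‖`, the great circles `m α m β` and `p i p j` are perpendicular
(`⟨m α ×₃ m β, p i ×₃ p j⟩ = 0`), and `⟨m α, p i⟩ ≠ 0` for every incident pair. -/
theorem spherical_maxwell_cremona_lift_to_reciprocal
    {V F : Type*} (Γ : SimpleGraph V)
    (mem : F → V → Prop)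
    (dualPair : F → F → V → V → Prop)
    (hdual : ∀ α β i j, dualPair α β i j →
      Γ.Adj i j ∧ mem α i ∧ mem α j ∧ mem β i ∧ mem β j)
    (p : V → Fin 3 → ℝ)
    (hsphere : ∀ i, p i ⬝ᵥ p i = 1)
    (hframe : ∀ i j, Γ.Adj i j → p i ≠ p j ∧ p i ≠ -p j)
    (a : V → ℝ) (ha : ∀ i, a i ≠ 0)
    (mt : F → Fin 3 → ℝ) (hmt : ∀ α, mt α ≠ 0)
    (hplane : ∀ α i, mem α i → mt α ⬝ᵥ (a i • p i) = 1)
    (m : F → Fin 3 → ℝ)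
    (hm : ∀ α, m α = (Real.sqrt (mt α ⬝ᵥ mt α))⁻¹ • mt α) :
    (∀ α β i j, dualPair α β i j →
      (mt β - mt α) ⬝ᵥ p i = 0 ∧ (mt β - mt α) ⬝ᵥ p j = 0 ∧
      (m α ⨯₃ m β) ⬝ᵥ (p i ⨯₃ p j) = 0) ∧
    (∀ α i, mem α i → m α ⬝ᵥ p i ≠ 0) :=
  spherical_maxwell_cremona_lift_to_reciprocal_general Γ mem dualPair hdual p a mt hplane m hm
end
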